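/- arXiv:2012.11388 — 4 statements merged into one kernel-verified Lean document; each statement's English description precedes it below -/
import Mathlib

section
/- Let $b\colon\Psi\to\Phi$ and $a\colon\Phi\to\Psi$ be homomorphisms of abelian groups. For $n\ge 0$ define $t_n\colon \Psi^{\oplus n}\oplus\Phi \to \Psi^{\oplus n}\oplus\Phi$ by $t_n(\psi_1,\dots,\psi_n,\varphi) = (-\psi_1-\cdots-\psi_n + a(\varphi),\, \psi_1,\dots,\psi_{n-1},\, \varphi - b(\psi_n))$. Then $t_n^{n+1} = T_\Psi^{\oplus n}\oplus T_\Phi$, where $T_\Psi = \mathrm{id}-ab$ and $T_\Phi = \mathrm{id}-ba$. -/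
/-!
Adjoin to `(ψ₁, …, ψₙ; φ)` the balancing entry `ψ₀ = a φ - (ψ₁ + ⋯ + ψₙ)`. In these
coordinates `t_n` becomes the twisted cyclic shift
`(ψ₀, …, ψₙ; φ) ↦ (T_Ψ ψₙ, ψ₀, …, ψₙ₋₁; φ - b ψₙ)`, because the new balancing entry is
`a (φ - b ψₙ) - (a φ - ψₙ) = T_Ψ ψₙ`. The orbit of this shift is a window of length `n + 1`
sliding along a sequence `u` with `u (j + n + 1) = T_Ψ (u j)`; after `n + 1` steps every entry
has been replaced by its image under `T_Ψ`, and `φ` has lost `b (ψ₀ + ⋯ + ψₙ) = b (a φ)`.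
-/

/-- The paracyclic rotation operator `t_n` on `N_n = Ψ^{⊕n} ⊕ Φ`:
`t_n(ψ₁,…,ψ_n; φ) = (-ψ₁-⋯-ψ_n + a φ, ψ₁,…,ψ_{n-1}; φ - b ψ_n)`
(for `n = 0` it is `φ ↦ φ - b (a φ)`). -/
def paraRot {Φ Ψ : Type*} [AddCommGroup Φ] [AddCommGroup Ψ]
    (a : Φ →+ Ψ) (b : Ψ →+ Φ) (n : ℕ) :
    ((Fin n → Ψ) × Φ) → ((Fin n → Ψ) × Φ) :=
  fun p =>
    if h : 0 < n then
      (fun k => if (k : ℕ) = 0 then -(∑ i, p.1 i) + a p.2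
        else p.1 ⟨(k : ℕ) - 1, by have := k.isLt; omega⟩,
       p.2 - b (p.1 ⟨n - 1, by omega⟩))
    else (p.1, p.2 - b (a p.2))

open Finset

section TwistedSeq

variable {α : Type*} (T : α → α) {n : ℕ}

def twistedSeq (x : Fin (n + 1) → α) (j : ℕ) : α :=
  T^[j / (n + 1)] (x (Fin.rev ⟨j % (n + 1), Nat.mod_lt _ n.succ_pos⟩))

variable {T}

lemma twistedSeq_rev (x : Fin (n + 1) → α) (i : Fin (n + 1)) :
    twistedSeq T x i.rev = x i := by
  simp only [twistedSeq, Nat.div_eq_of_lt i.rev.isLt, Function.iterate_zero, id,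
    Nat.mod_eq_of_lt i.rev.isLt, Fin.eta, Fin.rev_rev]

lemma twistedSeq_add (x : Fin (n + 1) → α) (j : ℕ) :
    twistedSeq T x (j + n + 1) = T (twistedSeq T x j) := by
  simp [twistedSeq, add_assoc, Nat.add_div_right, Function.iterate_succ_apply']

end TwistedSeq

section TwistedShift

variable {Φ Ψ : Type*} [AddCommGroup Φ] [AddCommGroup Ψ] (T : Ψ → Ψ) (b : Ψ →+ Φ) (n : ℕ)

def twistedShift (q : (Fin (n + 1) → Ψ) × Φ) : (Fin (n + 1) → Ψ) × Φ :=
  (Fin.cons (T (q.1 (Fin.last n))) (Fin.init q.1), q.2 - b (q.1 (Fin.last n)))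

def slidingWindow (u : ℕ → Ψ) (φ : Φ) (k : ℕ) : (Fin (n + 1) → Ψ) × Φ :=
  (fun i => u (k + i.rev), φ - b (∑ j ∈ range k, u j))

variable {T b n}

lemma twistedShift_slidingWindow {u : ℕ → Ψ} (φ : Φ) {k : ℕ} (hu : u (k + n + 1) = T (u k)) :
    twistedShift T b n (slidingWindow b n u φ k) = slidingWindow b n u φ (k + 1) := by
  ext i
  · refine Fin.cases ?_ (fun i => ?_) i
    · simp [twistedShift, slidingWindow, add_right_comm, hu]
    · simp only [twistedShift, slidingWindow, Fin.cons_succ, Fin.init, Fin.val_rev,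
        Fin.val_castSucc, Fin.val_succ]
      congr 1
      omega
  · simp [twistedShift, slidingWindow, sum_range_succ, sub_sub]

lemma twistedShift_iterate_slidingWindow {u : ℕ → Ψ} (hu : ∀ k, u (k + n + 1) = T (u k))
    (φ : Φ) (k : ℕ) :
    (twistedShift T b n)^[k] (slidingWindow b n u φ 0) = slidingWindow b n u φ k := by
  induction k with
  | zero => rfl
  | succ k ih => rw [Function.iterate_succ_apply', ih, twistedShift_slidingWindow φ (hu k)]

theorem twistedShift_iterate_succ_self (q : (Fin (n + 1) → Ψ) × Φ) :
    (twistedShift T b n)^[n + 1] q = (fun i => T (q.1 i), q.2 - b (∑ i, q.1 i)) := by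
  have hq : slidingWindow b n (twistedSeq T q.1) q.2 0 = q := by
    ext i
    · simp only [slidingWindow, zero_add, twistedSeq_rev]
    · simp [slidingWindow]
  calc (twistedShift T b n)^[n + 1] q
      = (twistedShift T b n)^[n + 1] (slidingWindow b n (twistedSeq T q.1) q.2 0) := by rw [hq]
    _ = slidingWindow b n (twistedSeq T q.1) q.2 (n + 1) :=
      twistedShift_iterate_slidingWindow (twistedSeq_add q.1) _ _
    _ = (fun i => T (q.1 i), q.2 - b (∑ i, q.1 i)) := by
      ext i
      · simp only [slidingWindow, add_comm (n + 1), ← add_assoc, twistedSeq_add, twistedSeq_rev]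
      · simp only [slidingWindow, ← Fin.sum_univ_eq_sum_range]
        rw [← Fintype.sum_equiv Fin.revPerm _ _ fun i => (twistedSeq_rev (T := T) q.1 i).symm]

end TwistedShift

section BalancedExtension

variable {Φ Ψ : Type*} [AddCommGroup Φ] [AddCommGroup Ψ] (a : Φ →+ Ψ) (b : Ψ →+ Φ) {n : ℕ}

def balancedExtension (p : (Fin n → Ψ) × Φ) : (Fin (n + 1) → Ψ) × Φ :=
  (Fin.cons (a p.2 - ∑ i, p.1 i) p.1, p.2)

lemma sum_balancedExtension (p : (Fin n → Ψ) × Φ) :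
    ∑ i, (balancedExtension a p).1 i = a p.2 := by
  simp [balancedExtension, Fin.sum_cons]

lemma paraRot_eq_init_balancedExtension (p : (Fin n → Ψ) × Φ) :
    paraRot a b n p = (Fin.init (balancedExtension a p).1,
      p.2 - b ((balancedExtension a p).1 (Fin.last n))) := by
  cases n with
  | zero =>
    ext i
    · exact i.elim0
    · simp [paraRot, balancedExtension]
  | succ m =>
    ext i
    · refine Fin.cases ?_ (fun i => ?_) i
      · simp [paraRot, balancedExtension, Fin.init, neg_add_eq_sub]
      · rfl
    · rfl

lemma balancedExtension_paraRot (p : (Fin n → Ψ) × Φ) :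
    balancedExtension a (paraRot a b n p) =
      twistedShift (fun ψ => ψ - a (b ψ)) b n (balancedExtension a p) := by
  set ψ := (balancedExtension a p).1 (Fin.last n)
  have hsum : ∑ i, Fin.init (balancedExtension a p).1 i = a p.2 - ψ := by
    rw [← sum_balancedExtension a p, Fin.sum_univ_castSucc, add_sub_cancel_right]
    rfl
  rw [paraRot_eq_init_balancedExtension]
  ext i
  · refine Fin.cases ?_ (fun i => ?_) i
    · change a (p.2 - b ψ) - ∑ i, Fin.init (balancedExtension a p).1 i = ψ - a (b ψ)
      rw [hsum, map_sub]
      abel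
    · rfl
  · rfl

end BalancedExtension

theorem paraRot_iterate_general {Φ Ψ : Type*} [AddCommGroup Φ] [AddCommGroup Ψ]
    (a : Φ →+ Ψ) (b : Ψ →+ Φ) (n : ℕ) (p : (Fin n → Ψ) × Φ) :
    (paraRot a b n)^[n + 1] p =
      (fun i => p.1 i - a (b (p.1 i)), p.2 - b (a p.2)) := by
  have h := (Function.Semiconj.iterate_right (balancedExtension_paraRot a b) (n + 1)) p
  rw [twistedShift_iterate_succ_self, sum_balancedExtension] at h
  ext i
  · simpa [balancedExtension] using congrFun (congrArg Prod.fst h) i.succ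
  · simpa [balancedExtension] using congrArg Prod.snd h

/-- `t_n^{n+1} = T_Ψ^{⊕n} ⊕ T_Φ` with `T_Ψ = id - a∘b`, `T_Φ = id - b∘a`. -/
theorem paraRot_iterate {Φ Ψ : Type*} [AddCommGroup Φ] [AddCommGroup Ψ]
    (a : Φ →+ Ψ) (b : Ψ →+ Φ) (n : ℕ) (hn : 1 ≤ n) (p : (Fin n → Ψ) × Φ) :
    (paraRot a b n)^[n + 1] p =
      (fun i => p.1 i - a (b (p.1 i)), p.2 - b (a p.2)) :=
  paraRot_iterate_general a b n p
end

section
/- With notation as before ($t_n$ on $\Psi^{\oplus n}\oplus\Phi$ given by $t_n(\psi_1,\dots,\psi_n,\varphi) = (-\sum_i\psi_i + a\varphi, \psi_1,\dots,\psi_{n-1}, \varphi - b\psi_n)$), if $\mathrm{id}_\Psi - ab$ and $\mathrm{id}_\Phi - ba$ are invertible then each $t_n$ is invertible. -/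
/-- if `id - a∘b` and `id - b∘a` are invertible then each `t_n` is invertible. -/
theorem paraRot_bijective {Φ Ψ : Type*} [AddCommGroup Φ] [AddCommGroup Ψ]
    (a : Φ →+ Ψ) (b : Ψ →+ Φ)
    (hΨ : Function.Bijective fun ψ : Ψ => ψ - a (b ψ))
    (hΦ : Function.Bijective fun φ : Φ => φ - b (a φ)) (n : ℕ) :
    Function.Bijective (paraRot a b n) := by
  cases n with
  | zero =>
    have h : paraRot a b 0 = Prod.map id fun φ => φ - b (a φ) := by
      funext p
      simp [paraRot, Prod.map]
    rw [h]
    exact Function.bijective_id.prodMap hΦ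
  | succ m =>
    set e := Equiv.ofBijective _ hΦ with he
    have he1 : ∀ x : Φ, e x = x - b (a x) := fun x => rfl
    have hpara : ∀ p : (Fin (m+1) → Ψ) × Φ, paraRot a b (m+1) p =
        ((fun k : Fin (m+1) => if (k : ℕ) = 0 then -(∑ i, p.1 i) + a p.2
          else p.1 ⟨(k : ℕ) - 1, by have := k.isLt; omega⟩),
         p.2 - b (p.1 ⟨m, by omega⟩)) := by
      intro p
      simp [paraRot]
    set g : ((Fin (m+1) → Ψ) × Φ) → ((Fin (m+1) → Ψ) × Φ) := fun q =>
      ((fun j : Fin (m+1) => if h : (j : ℕ) = m then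
          -(∑ i, q.1 i) + a (e.symm (q.2 - b (∑ i, q.1 i)))
        else q.1 ⟨(j : ℕ) + 1, by have := j.isLt; omega⟩),
        e.symm (q.2 - b (∑ i, q.1 i))) with hg
    rw [Function.bijective_iff_has_inverse]
    refine ⟨g, ?_, ?_⟩
    · -- left inverse : g (t p) = p
      intro p
      rw [hpara]
      set q1 : Fin (m+1) → Ψ := fun k : Fin (m+1) =>
        if (k : ℕ) = 0 then -(∑ i, p.1 i) + a p.2
          else p.1 ⟨(k : ℕ) - 1, by have := k.isLt; omega⟩ with hq1
      have hs : ∑ i, q1 i = a p.2 - p.1 ⟨m, by omega⟩ := by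
        rw [Fin.sum_univ_succ]
        have h0 : q1 0 = -(∑ i, p.1 i) + a p.2 := by simp [hq1]
        have hsucc : ∀ j : Fin m, q1 j.succ = p.1 j.castSucc := by
          intro j
          simp only [hq1, Fin.val_succ]
          rw [if_neg (by omega)]
          rfl
        rw [h0, Finset.sum_congr rfl fun j _ => hsucc j]
        rw [Fin.sum_univ_castSucc (f := p.1)]
        have hl : (Fin.last m) = (⟨m, by omega⟩ : Fin (m+1)) := rfl
        rw [hl]
        abel
      have hφ : e.symm ((p.2 - b (p.1 ⟨m, by omega⟩)) - b (∑ i, q1 i)) = p.2 := by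
        rw [hs]
        have harg : (p.2 - b (p.1 ⟨m, by omega⟩)) - b (a p.2 - p.1 ⟨m, by omega⟩)
            = e p.2 := by rw [he1, map_sub]; abel
        rw [harg, e.symm_apply_apply]
      rw [hg]
      refine Prod.ext ?_ hφ
      funext j
      by_cases hj : (j : ℕ) = m
      · simp only [dif_pos hj, hφ]
        have hpj : p.1 j = p.1 ⟨m, by omega⟩ := congrArg p.1 (Fin.ext hj)
        rw [hs, hpj]
        abel
      · simp only [dif_neg hj, hq1]
        rw [if_neg (by omega)]
        exact congrArg p.1 (Fin.ext (by simp))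
    · -- right inverse : t (g q) = q
      intro q
      rw [hpara, hg]
      set φ : Φ := e.symm (q.2 - b (∑ i, q.1 i)) with hφdef
      set w : Fin (m+1) → Ψ := fun j : Fin (m+1) => if h : (j : ℕ) = m then
          -(∑ i, q.1 i) + a φ
        else q.1 ⟨(j : ℕ) + 1, by have := j.isLt; omega⟩ with hw
      have hs : ∑ i, w i = a φ - q.1 0 := by
        rw [Fin.sum_univ_castSucc]
        have hlast : w (Fin.last m) = -(∑ i, q.1 i) + a φ := by
          simp [hw]
        have hcast : ∀ j : Fin m, w j.castSucc = q.1 j.succ := by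
          intro j
          have hlt := j.isLt
          simp only [hw, Fin.coe_castSucc]
          rw [dif_neg (by omega)]
          exact congrArg q.1 (Fin.ext (by simp))
        rw [hlast, Finset.sum_congr rfl fun j _ => hcast j]
        rw [Fin.sum_univ_succ (f := q.1)]
        abel
      have hwm : w ⟨m, by omega⟩ = -(∑ i, q.1 i) + a φ := by
        simp [hw]
      have h2 : φ - b (w ⟨m, by omega⟩) = q.2 := by
        rw [hwm, map_add, map_neg]
        have harg : φ - (-(b (∑ i, q.1 i)) + b (a φ)) = e φ + b (∑ i, q.1 i) := by
          rw [he1]; abel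
        rw [harg, hφdef, e.apply_symm_apply]
        abel
      refine Prod.ext ?_ h2
      funext k
      have hklt := k.isLt
      by_cases hk : (k : ℕ) = 0
      · simp only [if_pos hk, hs]
        have hqk : q.1 k = q.1 0 := congrArg q.1 (Fin.ext hk)
        rw [hqk]
        abel
      · simp only [if_neg hk, hw]
        rw [dif_neg (show ¬((k : ℕ) - 1 = m) by omega)]
        exact congrArg q.1 (Fin.ext (show (k : ℕ) - 1 + 1 = (k : ℕ) by omega))
end

section
/- Let $a\colon\Phi\to\Psi$, $b\colon\Psi\to\Phi$ be homomorphisms of abelian groups and define $t_n$ on $\Psi^{\oplus n}\oplus\Phi$ as above. Then the paracyclic relations hold: $\partial_i\circ t_n = t_{n-1}\circ\partial_{i-1}$ for $1\le i\le n$, and $\partial_0\circ t_n = \partial_n$, where $\partial_i$ are the face maps of the nerve of $[\Psi\xrightarrow{b}\Phi]$. -/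
/-- The face maps `∂_i : N_{n+1} → N_n` of the nerve of `[Ψ → Φ]`. -/
def nerveFace {Φ Ψ : Type*} [AddCommGroup Φ] [AddCommGroup Ψ]
    (b : Ψ →+ Φ) (n : ℕ) (i : Fin (n + 2)) :
    ((Fin (n + 1) → Ψ) × Φ) → ((Fin n → Ψ) × Φ) :=
  fun p =>
    (fun j =>
      if (j : ℕ) + 1 < (i : ℕ) then p.1 ⟨j, by have := j.isLt; omega⟩
      else if (j : ℕ) + 1 = (i : ℕ) then
        p.1 ⟨j, by have := j.isLt; omega⟩ + p.1 ⟨(j : ℕ) + 1, by have := j.isLt; omega⟩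
      else p.1 ⟨(j : ℕ) + 1, by have := j.isLt; omega⟩,
     if (i : ℕ) = n + 1 then p.2 - b (p.1 ⟨n, by omega⟩) else p.2)


lemma sum_merge {Ψ : Type*} [AddCommGroup Ψ] (f : ℕ → Ψ) (i : ℕ) (h1 : 1 ≤ i) :
    ∀ m, i ≤ m →
    ∑ j ∈ Finset.range m, (if j + 1 < i then f j else if j + 1 = i then f j + f (j + 1)
      else f (j + 1)) = ∑ j ∈ Finset.range (m + 1), f j := by
  refine Nat.le_induction ?_ ?_
  · obtain ⟨k, rfl⟩ : ∃ k, i = k + 1 := ⟨i - 1, by omega⟩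
    rw [Finset.sum_range_succ, Finset.sum_range_succ (f := f),
      Finset.sum_range_succ (f := f)]
    rw [if_neg (by omega), if_pos rfl]
    rw [Finset.sum_congr rfl (fun j hj => if_pos (by simp at hj; omega))]
    abel
  · intro m hm ih
    rw [Finset.sum_range_succ, ih, if_neg (by omega), if_neg (by omega),
      Finset.sum_range_succ (f := f) (n := m + 1)]

lemma faceSum {Ψ : Type*} [AddCommGroup Ψ] (m : ℕ) (p1 : Fin (m + 1) → Ψ) (i' : ℕ)
    (h1 : 1 ≤ i') (h2 : i' ≤ m) :
    ∑ j : Fin m, (if (j : ℕ) + 1 < i' then p1 ⟨(j : ℕ), by have := j.2; omega⟩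
      else if (j : ℕ) + 1 = i' then
        p1 ⟨(j : ℕ), by have := j.2; omega⟩ + p1 ⟨(j : ℕ) + 1, by have := j.2; omega⟩
      else p1 ⟨(j : ℕ) + 1, by have := j.2; omega⟩) = ∑ j, p1 j := by
  set P : ℕ → Ψ := fun l => if h : l < m + 1 then p1 ⟨l, h⟩ else 0 with hP
  have hPv : ∀ l (h : l < m + 1), P l = p1 ⟨l, h⟩ := fun l h => by rw [hP]; exact dif_pos h
  calc ∑ j : Fin m, (if (j : ℕ) + 1 < i' then p1 ⟨(j : ℕ), by have := j.2; omega⟩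
      else if (j : ℕ) + 1 = i' then
        p1 ⟨(j : ℕ), by have := j.2; omega⟩ + p1 ⟨(j : ℕ) + 1, by have := j.2; omega⟩
      else p1 ⟨(j : ℕ) + 1, by have := j.2; omega⟩)
      = ∑ j : Fin m, (fun l => if l + 1 < i' then P l
          else if l + 1 = i' then P l + P (l + 1) else P (l + 1)) (j : ℕ) := by
        refine Finset.sum_congr rfl fun j _ => ?_
        have hj := j.2
        simp only
        split_ifs
        · exact (hPv _ (by omega)).symm
        · rw [hPv _ (by omega), hPv _ (by omega)]
        · exact (hPv _ (by omega)).symm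
    _ = ∑ j ∈ Finset.range m, (if j + 1 < i' then P j
          else if j + 1 = i' then P j + P (j + 1) else P (j + 1)) :=
        Fin.sum_univ_eq_sum_range (fun l => if l + 1 < i' then P l
          else if l + 1 = i' then P l + P (l + 1) else P (l + 1)) m
    _ = ∑ j ∈ Finset.range (m + 1), P j := sum_merge P i' h1 m h2
    _ = ∑ j : Fin (m + 1), P (j : ℕ) := (Fin.sum_univ_eq_sum_range P (m + 1)).symm
    _ = ∑ j, p1 j := Finset.sum_congr rfl fun j _ => by
        rw [hPv _ j.2]

lemma faceSumZero {Ψ : Type*} [AddCommGroup Ψ] (m : ℕ) (p1 : Fin (m + 1) → Ψ) :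
    ∑ j : Fin m, p1 ⟨(j : ℕ) + 1, by have := j.2; omega⟩ = ∑ j, p1 j - p1 0 := by
  rw [Fin.sum_univ_succ p1]
  have : ∀ j : Fin m, p1 (⟨(j : ℕ) + 1, by have := j.2; omega⟩ : Fin (m + 1))
      = p1 (Fin.succ j) := fun j => by congr 1
  rw [Finset.sum_congr rfl fun j _ => this j]
  simp [Fin.succ]

/-- the rotation `t` and the face maps of the nerve of `[Ψ → Φ]`
satisfy the paracyclic relations `∂_i ∘ t_n = t_{n-1} ∘ ∂_{i-1}` for `1 ≤ i ≤ n`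
and `∂_0 ∘ t_n = ∂_n`  (here `n = m + 1`). -/
theorem paraRot_face_relations {Φ Ψ : Type*} [AddCommGroup Φ] [AddCommGroup Ψ]
    (a : Φ →+ Ψ) (b : Ψ →+ Φ) (m i : ℕ) (hi1 : 1 ≤ i) (hi2 : i ≤ m + 1)
    (p : (Fin (m + 1) → Ψ) × Φ) :
    nerveFace b m ⟨i, by omega⟩ (paraRot a b (m + 1) p) =
        paraRot a b m (nerveFace b m ⟨i - 1, by omega⟩ p) ∧
    nerveFace b m ⟨0, by omega⟩ (paraRot a b (m + 1) p) =
        nerveFace b m ⟨m + 1, by omega⟩ p := by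
  have hcongr : ∀ (x y : ℕ) (hx : x < m + 1) (hy : y < m + 1), x = y →
      p.1 ⟨x, hx⟩ = p.1 ⟨y, hy⟩ := fun x y hx hy h => by subst h; rfl
  constructor
  · rcases Nat.eq_zero_or_pos m with hm | hm
    · subst hm
      obtain rfl : i = 1 := by omega
      refine Prod.ext (funext fun j => j.elim0) ?_
      simp only [nerveFace, paraRot, dif_pos (Nat.succ_pos 0), dif_neg (lt_irrefl 0)]
      simp [Fin.sum_univ_one, map_add, map_neg, sub_eq_add_neg]
      abel
    · refine Prod.ext (funext fun k => ?_) ?_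
      · have hk := k.2
        simp only [nerveFace, paraRot, dif_pos hm, dif_pos (Nat.succ_pos m)]
        rw [if_neg (by omega : ¬ i - 1 = m + 1)]
        by_cases hk0 : (k : ℕ) = 0
        · rw [if_pos hk0]
          by_cases hi' : i = 1
          · subst hi'
            rw [if_neg (show ¬ (k : ℕ) + 1 < 1 by omega),
              if_pos (show (k : ℕ) + 1 = 1 by omega), if_pos hk0,
              if_neg (show ¬ (k : ℕ) + 1 = 0 by omega)]
            have e : ∀ j : Fin m, (if (j : ℕ) + 1 < 1 - 1 then p.1 ⟨(j : ℕ), by have := j.2; omega⟩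
                else if (j : ℕ) + 1 = 1 - 1 then
                  p.1 ⟨(j : ℕ), by have := j.2; omega⟩ + p.1 ⟨(j : ℕ) + 1, by have := j.2; omega⟩
                else p.1 ⟨(j : ℕ) + 1, by have := j.2; omega⟩)
                = p.1 ⟨(j : ℕ) + 1, by have := j.2; omega⟩ := fun j => by
              rw [if_neg (by omega), if_neg (by omega)]
            have hsum := (Finset.sum_congr rfl fun j _ => e j).trans (faceSumZero m p.1)
            rw [hsum, hcongr (↑k + 1 - 1) 0 (by omega) (by omega) (by omega),
              show (0 : Fin (m + 1)) = (⟨0, by omega⟩ : Fin (m + 1)) from rfl]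
            abel
          · rw [if_pos (by omega), if_pos hk0,
              faceSum m p.1 (i - 1) (by omega) (by omega)]
        · rw [if_neg hk0]
          rcases lt_trichotomy ((k : ℕ) + 1) i with h | h | h
          · rw [if_pos h, if_neg hk0, if_pos (show (k : ℕ) - 1 + 1 < i - 1 by omega)]
          · rw [if_neg (show ¬ (k : ℕ) + 1 < i by omega), if_pos h, if_neg hk0,
              if_neg (show ¬ (k : ℕ) + 1 = 0 by omega),
              if_neg (show ¬ (k : ℕ) - 1 + 1 < i - 1 by omega),
              if_pos (show (k : ℕ) - 1 + 1 = i - 1 by omega),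
              hcongr (↑k + 1 - 1) (↑k - 1 + 1) (by omega) (by omega) (by omega)]
          · rw [if_neg (show ¬ (k : ℕ) + 1 < i by omega),
              if_neg (show ¬ (k : ℕ) + 1 = i by omega),
              if_neg (show ¬ (k : ℕ) + 1 = 0 by omega), if_neg hk0,
              if_neg (show ¬ (k : ℕ) - 1 + 1 < i - 1 by omega),
              if_neg (show ¬ (k : ℕ) - 1 + 1 = i - 1 by omega),
              hcongr (↑k + 1 - 1) (↑k - 1 + 1) (by omega) (by omega) (by omega)]
      · simp only [nerveFace, paraRot, dif_pos hm, dif_pos (Nat.succ_pos m)]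
        rw [if_neg (by omega : ¬ i - 1 = m + 1)]
        by_cases him : i = m + 1
        · rw [if_pos him, if_neg (by omega : ¬ m = 0), if_neg (by omega : ¬ m - 1 + 1 < i - 1),
            if_pos (by omega : m - 1 + 1 = i - 1), map_add,
            hcongr (m + 1 - 1) (m - 1 + 1) (by omega) (by omega) (by omega)]
          abel
        · rw [if_neg him, if_neg (by omega : ¬ m - 1 + 1 < i - 1),
            if_neg (by omega : ¬ m - 1 + 1 = i - 1),
            hcongr (m + 1 - 1) (m - 1 + 1) (by omega) (by omega) (by omega)]
  · refine Prod.ext (funext fun j => ?_) ?_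
    · have hj := j.2
      simp only [nerveFace, paraRot, dif_pos (Nat.succ_pos m)]
      rw [if_neg (show ¬ ((j : ℕ) + 1 < 0) by omega),
        if_neg (show ¬ ((j : ℕ) + 1 = 0) by omega),
        if_neg (show ¬ ((j : ℕ) + 1 = 0) by omega),
        if_pos (show (j : ℕ) + 1 < m + 1 by omega),
        hcongr (↑j + 1 - 1) (↑j) (by omega) (by omega) (by omega)]
    · simp only [nerveFace, paraRot, dif_pos (Nat.succ_pos m)]
      rw [if_pos trivial, hcongr (m + 1 - 1) m (by omega) (by omega) (by omega),
        if_neg (show ¬ ((0 : ℕ) = m + 1) by omega)]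
end

section
/- Suppose a family of homomorphisms $t_n\colon\Psi^{\oplus n}\oplus\Phi\to\Psi^{\oplus n}\oplus\Phi$ extends the simplicial structure on the nerve of $[\Psi\xrightarrow{b}\Phi]$ to a duplicial structure (i.e. satisfies the relations dual to the paracyclic relations with the explicit face and degeneracy maps). Then $t_1$ is necessarily of the form $t_1(\psi;\varphi) = (-\psi + a(\varphi);\, \varphi - b(\psi))$ for a unique homomorphism $a\colon\Phi\to\Psi$, and $t_2(\psi_1,\psi_2;\varphi) = (-\psi_1-\psi_2+a(\varphi),\psi_1;\varphi-b(\psi_2))$. -/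
/-- if additive endomorphisms `t₁` of `N₁ = Ψ ⊕ Φ` and `t₂` of
`N₂ = Ψ ⊕ Ψ ⊕ Φ` satisfy the duplicial relations `∂_0 t₁ = ∂_1`, `∂_0 t₂ = ∂_2`,
`∂_1 t₂ = t₁ ∂_0`, `∂_2 t₂ = t₁ ∂_1` (with the explicit face maps of the nerve of
`[Ψ →b Φ]`), then there is a unique homomorphism `a : Φ → Ψ` such that
`t₁(ψ;φ) = (-ψ + a φ; φ - b ψ)` and `t₂(ψ₁,ψ₂;φ) = (-ψ₁-ψ₂+a φ, ψ₁; φ - b ψ₂)`. -/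
theorem duplicial_structure_determined {Φ Ψ : Type*} [AddCommGroup Φ] [AddCommGroup Ψ]
    (b : Ψ →+ Φ)
    (t1 : Ψ × Φ →+ Ψ × Φ) (t2 : Ψ × Ψ × Φ →+ Ψ × Ψ × Φ)
    (h1 : ∀ ψ φ, (t1 (ψ, φ)).2 = φ - b ψ)
    (h2 : ∀ p : Ψ × Ψ × Φ, (t2 p).2 = (p.1, p.2.2 - b p.2.1))
    (h3 : ∀ p : Ψ × Ψ × Φ, ((t2 p).1 + (t2 p).2.1, (t2 p).2.2) = t1 p.2)
    (h4 : ∀ p : Ψ × Ψ × Φ,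
      ((t2 p).1, (t2 p).2.2 - b (t2 p).2.1) = t1 (p.1 + p.2.1, p.2.2)) :
    ∃! a : Φ →+ Ψ,
      (∀ ψ φ, t1 (ψ, φ) = (-ψ + a φ, φ - b ψ)) ∧
      (∀ ψ₁ ψ₂ φ, t2 (ψ₁, ψ₂, φ) = (-ψ₁ - ψ₂ + a φ, ψ₁, φ - b ψ₂)) := by
  set a : Φ →+ Ψ := (AddMonoidHom.fst Ψ Φ).comp (t1.comp (AddMonoidHom.inr Ψ Φ)) with ha
  have ha' : ∀ φ, a φ = (t1 (0, φ)).1 := fun φ => rfl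
  -- key: first component of t2
  have key : ∀ ψ₁ ψ₂ φ, (t2 (ψ₁, ψ₂, φ)).1 = -ψ₁ - ψ₂ + a φ := by
    intro ψ₁ ψ₂ φ
    have e3 := congrArg Prod.fst (h3 (ψ₁, ψ₂, φ))
    have e2 := congrArg Prod.fst (h2 (ψ₁, ψ₂, φ))
    simp only at e3 e2
    -- e3 : (t2 p).1 + (t2 p).2.1 = (t1 (ψ₂, φ)).1, e2 : (t2 p).2.1 = ψ₁
    rw [e2] at e3
    -- now need (t1 (ψ₂, φ)).1 = -ψ₂ + a φ
    have key1 : ∀ ψ φ, (t1 (ψ, φ)).1 = -ψ + a φ := by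
      intro ψ φ
      have e4 := congrArg Prod.fst (h4 (ψ, 0, φ))
      have e3' := congrArg Prod.fst (h3 (ψ, 0, φ))
      have e2' := congrArg Prod.fst (h2 (ψ, 0, φ))
      simp only at e4 e3' e2'
      rw [e2'] at e3'
      rw [add_zero] at e4
      rw [← e4, ha' φ, ← e3']
      abel
    rw [key1] at e3
    rw [eq_sub_of_add_eq e3]
    abel
  have key1 : ∀ ψ φ, (t1 (ψ, φ)).1 = -ψ + a φ := by
    intro ψ φ
    have e4 := congrArg Prod.fst (h4 (ψ, 0, φ))
    have := key ψ 0 φ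
    simp only at e4
    rw [add_zero] at e4
    rw [← e4, this]
    abel
  refine ⟨a, ⟨fun ψ φ => ?_, fun ψ₁ ψ₂ φ => ?_⟩, ?_⟩
  · exact Prod.ext (key1 ψ φ) (h1 ψ φ)
  · exact Prod.ext (key ψ₁ ψ₂ φ) (h2 (ψ₁, ψ₂, φ))
  · rintro a' ⟨h1', -⟩
    ext φ
    have := congrArg Prod.fst (h1' 0 φ)
    simp only [neg_zero, zero_add] at this
    rw [← this, ha' φ]
end
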